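/- arXiv:1504.03163 — 3 statements merged into one kernel-verified Lean document; each statement's English description precedes it below -/
import Mathlib

section
/- For every pair of natural numbers m, n ≥ 1, there is exactly one triple (a, b, c) in C satisfying both c − b = (2m − 1)² and c − a = 2n²; i.e., the intersection odd(m) ∩ even(n) is a singleton. -/
/-!
Writing the generators as `u = v + d`, the triple `(a, b, c)` satisfies `c - b = d²` and
`c - a = 2 v²`. So `odd(m) ∩ even(n)` consists of the triples with `d = 2m - 1` and `v = n`,
and these parameters are admissible exactly when `m, n ≥ 1`.
-/

/-- Membership in the set `C`: Euclidean triples generated by `u > v ≥ 1` with `u − v` odd. -/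
def InC (a b c : ℕ) : Prop :=
  ∃ u v : ℕ, 1 ≤ v ∧ v < u ∧ Odd (u - v) ∧
    a = u ^ 2 - v ^ 2 ∧ b = 2 * u * v ∧ c = u ^ 2 + v ^ 2

def euclidTriple (u v : ℕ) : ℕ × ℕ × ℕ := (u ^ 2 - v ^ 2, 2 * u * v, u ^ 2 + v ^ 2)

theorem inC_iff {t : ℕ × ℕ × ℕ} :
    InC t.1 t.2.1 t.2.2 ↔ ∃ u v, 1 ≤ v ∧ v < u ∧ Odd (u - v) ∧ t = euclidTriple u v := by
  obtain ⟨a, b, c⟩ := t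
  simp [InC, euclidTriple]

theorem euclidTriple_add_sub_snd (v d : ℕ) :
    (euclidTriple (v + d) v).2.2 - (euclidTriple (v + d) v).2.1 = d ^ 2 := by
  have h : (v + d) ^ 2 + v ^ 2 = 2 * (v + d) * v + d ^ 2 := by ring
  simp only [euclidTriple]
  omega

theorem euclidTriple_add_sub_fst (v d : ℕ) :
    (euclidTriple (v + d) v).2.2 - (euclidTriple (v + d) v).1 = 2 * v ^ 2 := by
  have h : v ^ 2 ≤ (v + d) ^ 2 := Nat.pow_le_pow_left (Nat.le_add_right v d) 2
  simp only [euclidTriple]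
  omega

/-- For every `m, n ≥ 1` there is exactly one triple `(a, b, c)` in `C` with
`c − b = (2m − 1)²` and `c − a = 2n²`: the intersection `odd(m) ∩ even(n)` is a singleton. -/
theorem odd_inter_even_singleton (m n : ℕ) (hm : 1 ≤ m) (hn : 1 ≤ n) :
    ∃! t : ℕ × ℕ × ℕ, InC t.1 t.2.1 t.2.2 ∧
      t.2.2 - t.2.1 = (2 * m - 1) ^ 2 ∧ t.2.2 - t.1 = 2 * n ^ 2 := by
  have hodd : Odd (n + (2 * m - 1) - n) := ⟨m - 1, by omega⟩
  refine ⟨euclidTriple (n + (2 * m - 1)) n,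
    ⟨inC_iff.2 ⟨_, n, hn, by omega, hodd, rfl⟩, euclidTriple_add_sub_snd _ _,
      euclidTriple_add_sub_fst _ _⟩, ?_⟩
  rintro t ⟨hC, hsnd, hfst⟩
  obtain ⟨u, v, -, hvu, -, rfl⟩ := inC_iff.1 hC
  obtain ⟨d, rfl⟩ := Nat.exists_eq_add_of_le hvu.le
  rw [euclidTriple_add_sub_snd] at hsnd
  rw [euclidTriple_add_sub_fst] at hfst
  have hv : v = n := Nat.pow_left_injective two_ne_zero (by omega : v ^ 2 = n ^ 2)
  have hd : d = 2 * m - 1 := Nat.pow_left_injective two_ne_zero hsnd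
  rw [hv, hd]
end

section
/- For natural numbers m, n ≥ 1, the unique triple (a, b, c) in C with c − b = (2m − 1)² and c − a = 2n² is given by the explicit formulas a = 4m² − 4m + 1 + 4nm − 2n, b = 2n² − 2n + 4nm, and c = 2n² − 2n + 4nm + 4m² − 4m + 1. -/
theorem Nat.sq_add_sq_sub_two_mul_mul {u v : ℕ} (h : v ≤ u) :
    u ^ 2 + v ^ 2 - 2 * u * v = (u - v) ^ 2 := by
  have : 2 * u * v ≤ u ^ 2 + v ^ 2 := by nlinarith
  zify [h, this]
  ring

theorem Nat.sq_add_sq_sub_sq_sub_sq {u v : ℕ} (h : v ≤ u) :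
    u ^ 2 + v ^ 2 - (u ^ 2 - v ^ 2) = 2 * v ^ 2 := by
  have : v ^ 2 ≤ u ^ 2 := Nat.pow_le_pow_left h 2
  omega

theorem InC.eq_of_sub_eq {a b c k n : ℕ} (hC : InC a b c)
    (hb : c - b = k ^ 2) (ha : c - a = 2 * n ^ 2) :
    a = k ^ 2 + 2 * k * n ∧ b = 2 * k * n + 2 * n ^ 2 ∧ c = k ^ 2 + 2 * k * n + 2 * n ^ 2 := by
  obtain ⟨u, v, -, hvu, -, rfl, rfl, rfl⟩ := hC
  have hk : u - v = k := by
    rw [Nat.sq_add_sq_sub_two_mul_mul hvu.le] at hb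
    exact Nat.pow_left_injective two_ne_zero hb
  have hn : v = n := by
    rw [Nat.sq_add_sq_sub_sq_sub_sq hvu.le] at ha
    exact Nat.pow_left_injective two_ne_zero (by simpa using ha)
  obtain rfl : u = k + n := by omega
  subst hn
  refine ⟨?_, by ring, by ring⟩
  rw [Nat.sub_eq_iff_eq_add (Nat.pow_le_pow_left (Nat.le_add_left _ _) 2)]
  ring

theorem triple_explicit_formulas_general (m n a b c : ℕ) (hm : 1 ≤ m)
    (hC : InC a b c)
    (hodd : c - b = (2 * m - 1) ^ 2) (heven : c - a = 2 * n ^ 2) :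
    a = 4 * m ^ 2 - 4 * m + 1 + 4 * n * m - 2 * n ∧
    b = 2 * n ^ 2 - 2 * n + 4 * n * m ∧
    c = 2 * n ^ 2 - 2 * n + 4 * n * m + 4 * m ^ 2 - 4 * m + 1 := by
  obtain ⟨rfl, rfl, rfl⟩ := hC.eq_of_sub_eq hodd heven
  obtain ⟨j, rfl⟩ : ∃ j, m = j + 1 := ⟨m - 1, by omega⟩
  have hk : 2 * (j + 1) - 1 = 2 * j + 1 := by omega
  have hn : n ≤ n ^ 2 := Nat.le_self_pow two_ne_zero n
  rw [hk]
  refine ⟨?_, ?_, ?_⟩ <;> ring_nf <;> omega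

/-- For `m, n ≥ 1`, any triple in `C` with `c − b = (2m − 1)²` and `c − a = 2n²` is given
by the explicit Diophantine formulas. -/
theorem triple_explicit_formulas (m n a b c : ℕ) (hm : 1 ≤ m) (hn : 1 ≤ n)
    (hC : InC a b c)
    (hodd : c - b = (2 * m - 1) ^ 2) (heven : c - a = 2 * n ^ 2) :
    a = 4 * m ^ 2 - 4 * m + 1 + 4 * n * m - 2 * n ∧
    b = 2 * n ^ 2 - 2 * n + 4 * n * m ∧
    c = 2 * n ^ 2 - 2 * n + 4 * n * m + 4 * m ^ 2 - 4 * m + 1 :=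
  triple_explicit_formulas_general m n a b c hm hC hodd heven
end

section
/- For natural numbers m, n ≥ 1, the Pythagorean triple 𝔓(m, n) is primitive if and only if n and 2m − 1 are relatively prime, i.e., gcd(n, 2m − 1) = 1. -/
/-!
With `k = 2m - 1`, the triple `𝔓(m, n)` is Euclid's triple `(u² - v², 2uv, u² + v²)` for
`u = n + k`, `v = n`. A prime dividing all three entries of a Euclid triple divides `2u²` and `2v²`;
so the triple is primitive exactly when `u` and `v` are coprime and of opposite parity. Here
`u + v = 2n + k` is odd, and `gcd(n + k, n) = gcd(k, n)`.
-/

/-- The parameterisation `𝔓(m, n)` of Pythagorean triples. -/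
def frakP (m n : ℕ) : ℕ × ℕ × ℕ :=
  (4 * m ^ 2 - 4 * m + 1 + 4 * n * m - 2 * n,
   2 * n ^ 2 - 2 * n + 4 * n * m,
   2 * n ^ 2 - 2 * n + 4 * n * m + 4 * m ^ 2 - 4 * m + 1)

def IsPrimitiveTriple (t : ℕ × ℕ × ℕ) : Prop :=
  Nat.gcd t.1 (Nat.gcd t.2.1 t.2.2) = 1

theorem isPrimitiveTriple_iff_forall_prime {t : ℕ × ℕ × ℕ} :
    IsPrimitiveTriple t ↔ ∀ p, p.Prime → p ∣ t.1 → p ∣ t.2.1 → ¬ p ∣ t.2.2 := by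
  simp only [IsPrimitiveTriple, Nat.eq_one_iff_not_exists_prime_dvd, Nat.dvd_gcd_iff, not_and]

theorem isPrimitiveTriple_euclidTriple_iff {u v : ℕ} (h : v ≤ u) :
    IsPrimitiveTriple (euclidTriple u v) ↔ u.Coprime v ∧ Odd (u + v) := by
  have hsq : v ^ 2 ≤ u ^ 2 := Nat.pow_le_pow_left h 2
  simp only [isPrimitiveTriple_iff_forall_prime, euclidTriple]
  constructor
  · intro hprim
    constructor
    · refine Nat.coprime_of_dvd fun p hp hpu hpv => ?_
      exact hprim p hp (Nat.dvd_sub (dvd_pow hpu two_ne_zero) (dvd_pow hpv two_ne_zero))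
        (dvd_mul_of_dvd_right hpv _) (dvd_add (dvd_pow hpu two_ne_zero) (dvd_pow hpv two_ne_zero))
    · rw [← Nat.not_even_iff_odd]
      intro heven
      have hparity : Even u ↔ Even v := Nat.even_add.1 heven
      refine hprim 2 Nat.prime_two ?_ ?_ ?_ <;>
        simp [← even_iff_two_dvd, Nat.even_sub hsq, Nat.even_add, Nat.even_pow, hparity]
  · rintro ⟨hcop, hodd⟩ p hp hdiff hprod hsum
    have hp2 : p ≠ 2 := by
      rintro rfl
      simp only [← even_iff_two_dvd, Nat.even_sub hsq, Nat.even_pow] at hdiff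
      rw [Nat.odd_add, ← Nat.not_even_iff_odd] at hodd
      tauto
    have hcop2 : p.Coprime 2 := (Nat.coprime_primes hp Nat.prime_two).2 hp2
    have hu2 : p ∣ 2 * u ^ 2 := by
      rw [show 2 * u ^ 2 = u ^ 2 - v ^ 2 + (u ^ 2 + v ^ 2) by omega]
      exact dvd_add hdiff hsum
    have hv2 : p ∣ 2 * v ^ 2 := by
      rw [show 2 * v ^ 2 = u ^ 2 + v ^ 2 - (u ^ 2 - v ^ 2) by omega]
      exact Nat.dvd_sub hsum hdiff
    exact Nat.not_coprime_of_dvd_of_dvd hp.one_lt (hp.dvd_of_dvd_pow (hcop2.dvd_of_dvd_mul_left hu2))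
      (hp.dvd_of_dvd_pow (hcop2.dvd_of_dvd_mul_left hv2)) hcop

theorem frakP_eq_euclidTriple {m : ℕ} (hm : 1 ≤ m) (n : ℕ) :
    frakP m n = euclidTriple (n + (2 * m - 1)) n := by
  obtain ⟨j, rfl⟩ : ∃ j, m = j + 1 := ⟨m - 1, by omega⟩
  -- none of the truncated subtractions truncates, so the identities can be checked over `ℤ`
  have h1 : 4 * (j + 1) ≤ 4 * (j + 1) ^ 2 := by nlinarith
  have h2 : 2 * n ≤ 2 * n ^ 2 := by nlinarith
  have h3 : 2 * n ≤ 4 * (j + 1) ^ 2 - 4 * (j + 1) + 1 + 4 * n * (j + 1) := by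
    have : 2 * n ≤ 4 * n * (j + 1) := by nlinarith
    omega
  have h4 : 4 * (j + 1) ≤ 2 * n ^ 2 - 2 * n + 4 * n * (j + 1) + 4 * (j + 1) ^ 2 := by omega
  have h5 : n ^ 2 ≤ (n + (2 * (j + 1) - 1)) ^ 2 := Nat.pow_le_pow_left (by omega) 2
  rw [show 2 * (j + 1) - 1 = 2 * j + 1 by omega] at h5 ⊢
  simp only [frakP, euclidTriple, Prod.mk.injEq]
  refine ⟨?_, ?_, ?_⟩
  · zify [h1, h3, h5]; ring
  · zify [h2]; ring
  · zify [h2, h4]; ring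

theorem frakP_primitive_iff_general (m n : ℕ) (hm : 1 ≤ m) :
    Nat.gcd (frakP m n).1 (Nat.gcd (frakP m n).2.1 (frakP m n).2.2) = 1 ↔
      Nat.gcd n (2 * m - 1) = 1 := by
  change IsPrimitiveTriple (frakP m n) ↔ _
  have hodd : Odd (2 * m - 1) := ⟨m - 1, by omega⟩
  rw [frakP_eq_euclidTriple hm, isPrimitiveTriple_euclidTriple_iff (Nat.le_add_right _ _),
    Nat.coprime_self_add_left, Nat.coprime_comm, add_right_comm, ← two_mul]
  simp [(even_two_mul n).add_odd hodd, Nat.Coprime]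

/-- For `m, n ≥ 1`, the Pythagorean triple `𝔓(m, n)` is primitive if and only if
`n` and `2m − 1` are relatively prime. -/
theorem frakP_primitive_iff (m n : ℕ) (hm : 1 ≤ m) (hn : 1 ≤ n) :
    Nat.gcd (frakP m n).1 (Nat.gcd (frakP m n).2.1 (frakP m n).2.2) = 1 ↔
      Nat.gcd n (2 * m - 1) = 1 :=
  frakP_primitive_iff_general m n hm
end
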